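/- For m ≥ 3 and n ≥ 3, the constraint matrix A of the fixed-support Wasserstein barycenter LP, defined in block form with first m block-rows (−1)^k (I_n ⊗ 1_n^T) in block column k (and zeros elsewhere), and m−1 further block-rows in which block-row m+k has (−1)^{k+1}(1_n^T ⊗ I_n) in block column k and (−1)^{k}(1_n^T ⊗ I_n) in block column k+1, is not totally unimodular. -/

import Mathlib

/-!
For `m = n = 3`, the rows `(1,1), (2,1), (3,1)` of the upper blocks and `(1,1), (1,2), (2,1), (2,3)`
of the lower blocks, together with seven suitable columns, cut out a 7 × 7 submatrix with two
nonzero entries in each row and column, arranged along a single cycle whose signs make the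
determinant `2`. For larger `m` and `n` the matrix for `(3, 3)` is itself a submatrix of `A`
(keep the first three indices in every coordinate), and total unimodularity passes to submatrices.
-/

/-- A matrix with integer entries is totally unimodular if every square submatrix
has determinant in {-1, 0, 1}. -/
def IsTotallyUnimodular' {α β : Type*} (A : Matrix α β ℤ) : Prop :=
  ∀ (k : ℕ) (f : Fin k → α) (g : Fin k → β),
    Function.Injective f → Function.Injective g →
      (A.submatrix f g).det ∈ ({-1, 0, 1} : Set ℤ)

/-- The constraint matrix of the fixed-support Wasserstein barycenter LP.
Rows `Sum.inl (k, i)` are the `m` upper block-rows: block-row `k` (`0`-indexed) carries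
`(-1)^(k+1) • (Iₙ ⊗ 1ₙᵀ)` in block column `k` (so `(-1)^k` for `1`-indexed `k`), with
`(Iₙ ⊗ 1ₙᵀ)_{i,(p,q)} = δ_{ip}`.  Rows `Sum.inr (k, j)` are the `m - 1` lower block-rows:
block-row `k` (`0`-indexed) carries `(-1)^k • (1ₙᵀ ⊗ Iₙ)` in block column `k` and
`(-1)^(k+1) • (1ₙᵀ ⊗ Iₙ)` in block column `k + 1`, with `(1ₙᵀ ⊗ Iₙ)_{j,(p,q)} = δ_{jq}`.
Columns are indexed by `(l, p, q)`: entry `(p, q)` of `vec(X_l)`. -/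
def barycenterConstraintMatrix (m n : ℕ) :
    Matrix ((Fin m × Fin n) ⊕ (Fin (m - 1) × Fin n)) (Fin m × Fin n × Fin n) ℤ :=
  fun r c =>
    match r with
    | Sum.inl (k, i) => if c.1 = k ∧ c.2.1 = i then (-1) ^ (k.val + 1) else 0
    | Sum.inr (k, j) =>
        if c.2.2 = j then
          (if c.1.val = k.val then (-1) ^ k.val
           else if c.1.val = k.val + 1 then (-1) ^ (k.val + 1) else 0)
        else 0

open Matrix

theorem isTotallyUnimodular'_iff {α β : Type*} (A : Matrix α β ℤ) :
    IsTotallyUnimodular' A ↔ A.IsTotallyUnimodular := by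
  have hrange : ({-1, 0, 1} : Set ℤ) = Set.range SignType.cast := by
    simp [SignType.range_eq, Set.insert_comm]
  rw [IsTotallyUnimodular', IsTotallyUnimodular, hrange]

theorem barycenterConstraintMatrix_submatrix_castLE {m n m' n' : ℕ} (hm : m ≤ m') (hn : n ≤ n') :
    (barycenterConstraintMatrix m' n').submatrix
        (Sum.map (Prod.map (Fin.castLE hm) (Fin.castLE hn))
          (Prod.map (Fin.castLE (Nat.sub_le_sub_right hm 1)) (Fin.castLE hn)))
        (Prod.map (Fin.castLE hm) (Prod.map (Fin.castLE hn) (Fin.castLE hn))) =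
      barycenterConstraintMatrix m n := by
  ext (⟨k, i⟩ | ⟨k, j⟩) ⟨l, p, q⟩ <;> simp [barycenterConstraintMatrix, Fin.ext_iff]

def oddCycleMatrix : Matrix (Fin 7) (Fin 7) ℤ :=
  !![-1, -1,  0,  0,  0,  0,  0;
      0,  0,  1,  1,  0,  0,  0;
      0,  0,  0,  0,  0, -1, -1;
      1,  0,  0,  0, -1,  0,  0;
      0,  1, -1,  0,  0,  0,  0;
      0,  0,  0,  0, -1,  1,  0;
      0,  0,  0, -1,  0,  0,  1]

theorem det_oddCycleMatrix : oddCycleMatrix.det = 2 := by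
  simp [oddCycleMatrix, det_succ_row_zero, Fin.sum_univ_succ, Fin.succAbove]

def oddCycleRows : Fin 7 → (Fin 3 × Fin 3) ⊕ (Fin 2 × Fin 3) :=
  ![.inl (0, 0), .inl (1, 0), .inl (2, 0), .inr (0, 0), .inr (0, 1), .inr (1, 0), .inr (1, 2)]

def oddCycleCols : Fin 7 → Fin 3 × Fin 3 × Fin 3 :=
  ![(0, 0, 0), (0, 0, 1), (1, 0, 1), (1, 0, 2), (1, 1, 0), (2, 0, 0), (2, 0, 2)]

theorem barycenterConstraintMatrix_submatrix_oddCycle :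
    (barycenterConstraintMatrix 3 3).submatrix oddCycleRows oddCycleCols = oddCycleMatrix := by
  decide

theorem barycenterConstraintMatrix_three_three_not_isTotallyUnimodular :
    ¬ (barycenterConstraintMatrix 3 3).IsTotallyUnimodular := by
  intro hTU
  have hdet := (isTotallyUnimodular_iff _).1 hTU 7 oddCycleRows oddCycleCols
  rw [barycenterConstraintMatrix_submatrix_oddCycle, det_oddCycleMatrix, SignType.range_eq] at hdet
  simp at hdet

theorem barycenter_matrix_not_TU {m n : ℕ} (hm : 3 ≤ m) (hn : 3 ≤ n) :
    ¬ IsTotallyUnimodular' (barycenterConstraintMatrix m n) := by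
  rw [isTotallyUnimodular'_iff]
  intro hTU
  apply barycenterConstraintMatrix_three_three_not_isTotallyUnimodular
  rw [← barycenterConstraintMatrix_submatrix_castLE hm hn]
  exact hTU.submatrix _ _
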